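/- arXiv:1410.7032 — 2 statements merged into one kernel-verified Lean document; each statement's English description precedes it below -/
import Mathlib

section
/- With the same setup (transition weights p_{ij} ∈ (0,1) on G_2, words σ, p_σ, the sets Λ_j, and ψ_j := card(Λ_j)), assume every letter i ∈ {1,...,N} has at least two admissible successors. Then there is a constant N_2 > 0 (one may take N_2 = N^{N_1+1} with N_1 := min{h ≥ 1 : p̄^h < p̲}) such that ψ_j ≤ ψ_{j+1} ≤ N_2 ψ_j for all j ≥ 1. -/
open Finset

def pword {N : ℕ} (p : Fin N → Fin N → ℝ) (l : List (Fin N)) : ℝ :=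
  ((l.zip l.tail).map fun ab => p ab.1 ab.2).prod

def admissibleG {N : ℕ} (G2 : Finset (Fin N × Fin N)) (l : List (Fin N)) : Prop :=
  l ≠ [] ∧ l.Chain' fun a b => (a, b) ∈ G2

/-!
The sets `Λ j` are prefix antichains: a word is in `Λ j` exactly when its weight first drops
below `p̲ ^ j` at its last letter. Since every letter has a successor and weights decay
geometrically, each `σ ∈ Λ j` extends to some `τ ∈ Λ (j + 1)`, and distinct `σ` give distinct `τ`
(two prefixes of one word in an antichain coincide): hence `ψ j ≤ ψ (j + 1)`. Conversely each
`τ ∈ Λ (j + 1)` has a prefix `σ ∈ Λ j`, and since every letter multiplies the weight by at most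
`p̄` while `p̄ ^ N₁ < p̲`, `τ` is `σ` followed by at most `N₁` letters. Padding the tail to
`N₁ + 1` letters maps `Λ (j + 1)` injectively into `Λ j × (Fin N) ^ (N₁ + 1)`, because `τ` is the
only prefix of the padded word lying in the antichain `Λ (j + 1)`.
-/

section PrefixCounting

variable {α : Type*} {A B : Set (List α)}

lemma IsAntichain.eq_of_isPrefix_of_isPrefix (hA : IsAntichain (· <+: ·) A) {a b l : List α}
    (ha : a ∈ A) (hb : b ∈ A) (hal : a <+: l) (hbl : b <+: l) : a = b := by
  rcases List.prefix_or_prefix_of_prefix hal hbl with h | h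
  exacts [hA.eq ha hb h, (hA.eq hb ha h).symm]

lemma ncard_le_ncard_of_forall_isPrefix (hA : IsAntichain (· <+: ·) A) (hB : B.Finite)
    (h : ∀ a ∈ A, ∃ b ∈ B, a <+: b) : A.ncard ≤ B.ncard := by
  choose! f hfB hf using h
  refine Set.ncard_le_ncard_of_injOn f hfB (fun a ha a' ha' he => ?_) hB
  exact hA.eq_of_isPrefix_of_isPrefix ha ha' (hf a ha) (he ▸ hf a' ha')

lemma exists_vector_isPrefix_append [Nonempty α] {σ τ : List α} {k : ℕ} (h : σ <+: τ)
    (hk : τ.length ≤ σ.length + k) : ∃ w : List.Vector α k, τ <+: σ ++ w.toList := by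
  obtain ⟨m, rfl⟩ := h
  inhabit α
  refine ⟨⟨m ++ List.replicate (k - m.length) default, ?_⟩, ?_⟩
  · simp only [List.length_append, List.length_replicate] at hk ⊢
    omega
  · exact (List.prefix_append_right_inj σ).mpr (List.prefix_append _ _)

lemma ncard_le_ncard_mul_pow_of_forall_isPrefix [Fintype α] [Nonempty α]
    (hA : IsAntichain (· <+: ·) A) (hB : B.Finite) (k : ℕ)
    (h : ∀ τ ∈ A, ∃ σ ∈ B, σ <+: τ ∧ τ.length ≤ σ.length + k) :
    A.ncard ≤ B.ncard * Fintype.card α ^ k := by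
  have hpad : ∀ τ ∈ A, ∃ σw : List α × List.Vector α k,
      σw ∈ B ×ˢ Set.univ ∧ τ <+: σw.1 ++ σw.2.toList := by
    intro τ hτ
    obtain ⟨σ, hσ, hστ, hk⟩ := h τ hτ
    obtain ⟨w, hw⟩ := exists_vector_isPrefix_append hστ hk
    exact ⟨(σ, w), ⟨hσ, Set.mem_univ w⟩, hw⟩
  inhabit α
  choose! g hgB hg using hpad
  calc A.ncard ≤ (B ×ˢ (Set.univ : Set (List.Vector α k))).ncard :=
        Set.ncard_le_ncard_of_injOn g hgB (fun τ hτ τ' hτ' he =>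
          hA.eq_of_isPrefix_of_isPrefix hτ hτ' (hg τ hτ) (he ▸ hg τ' hτ')) (hB.prod Set.finite_univ)
    _ = B.ncard * Fintype.card α ^ k := by
        rw [Set.ncard_prod, Set.ncard_univ, Nat.card_eq_fintype_card, card_vector]

end PrefixCounting

section Weights

variable {N : ℕ} {G2 : Finset (Fin N × Fin N)} {p : Fin N → Fin N → ℝ} {q : ℝ}

@[simp] lemma pword_nil : pword p [] = 1 := rfl

@[simp] lemma pword_singleton (a : Fin N) : pword p [a] = 1 := rfl

@[simp] lemma pword_cons_cons (a b : Fin N) (l : List (Fin N)) :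
    pword p (a :: b :: l) = p a b * pword p (b :: l) := by
  simp [pword]

lemma pword_nonneg (hp : ∀ a b, (a, b) ∈ G2 → 0 ≤ p a b) {l : List (Fin N)}
    (hl : l.IsChain fun a b => (a, b) ∈ G2) : 0 ≤ pword p l := by
  induction hl with
  | nil | singleton => simp
  | cons_cons hab _ ih => simpa using mul_nonneg (hp _ _ hab) ih

lemma pword_le_pow (hp : ∀ a b, (a, b) ∈ G2 → 0 ≤ p a b ∧ p a b ≤ q) {l : List (Fin N)}
    (hl : l.IsChain fun a b => (a, b) ∈ G2) : pword p l ≤ q ^ (l.length - 1) := by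
  induction hl with
  | nil | singleton => simp
  | @cons_cons a b l hab hbl ih =>
    have hq : 0 ≤ q := (hp a b hab).1.trans (hp a b hab).2
    simpa [pow_succ'] using mul_le_mul (hp a b hab).2 ih
      (pword_nonneg (fun a b h => (hp a b h).1) hbl) hq

lemma pword_append_le (hp : ∀ a b, (a, b) ∈ G2 → 0 ≤ p a b ∧ p a b ≤ q) (m : List (Fin N)) :
    ∀ {σ : List (Fin N)}, σ ≠ [] → (σ ++ m).IsChain (fun a b => (a, b) ∈ G2) →
      pword p (σ ++ m) ≤ pword p σ * q ^ m.length
  | [a], _, hl => by simpa using pword_le_pow hp hl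
  | a :: b :: s, _, hl => by
    simp only [List.cons_append, pword_cons_cons, mul_assoc] at hl ⊢
    exact mul_le_mul_of_nonneg_left (pword_append_le hp m (List.cons_ne_nil _ _) hl.tail)
      (hp a b hl.rel).1

lemma pword_le_of_isPrefix (hp : ∀ a b, (a, b) ∈ G2 → 0 ≤ p a b ∧ p a b ≤ 1)
    {σ τ : List (Fin N)} (hσ : σ ≠ []) (hτ : τ.IsChain fun a b => (a, b) ∈ G2) (h : σ <+: τ) :
    pword p τ ≤ pword p σ := by
  obtain ⟨m, rfl⟩ := h
  simpa using pword_append_le hp m hσ hτ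

end Weights

section Crossing

variable {N : ℕ} {G2 : Finset (Fin N × Fin N)} {p : Fin N → Fin N → ℝ} {q c c' : ℝ}

/-- `IsCrossing G2 p (p̲ ^ j)` is membership in the paper's `Λ_j`. -/
def IsCrossing (G2 : Finset (Fin N × Fin N)) (p : Fin N → Fin N → ℝ) (c : ℝ)
    (l : List (Fin N)) : Prop :=
  admissibleG G2 l ∧ c ≤ pword p l.dropLast ∧ pword p l < c

lemma exists_admissibleG_append (hsucc : ∀ i, ∃ j, (i, j) ∈ G2) {l : List (Fin N)}
    (hl : admissibleG G2 l) (n : ℕ) :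
    ∃ m : List (Fin N), m.length = n ∧ admissibleG G2 (l ++ m) := by
  induction n with
  | zero => exact ⟨[], rfl, by simpa using hl⟩
  | succ n ih =>
    obtain ⟨m, rfl, hne, hm⟩ := ih
    obtain ⟨b, hb⟩ := hsucc ((l ++ m).getLast hne)
    refine ⟨m ++ [b], by simp, by simp, ?_⟩
    rw [← List.append_assoc]
    exact List.IsChain.append hm (.singleton b) (by simp [List.getLast?_eq_some_getLast hne, hb])

lemma isAntichain_setOf_isCrossing (hp : ∀ a b, (a, b) ∈ G2 → 0 ≤ p a b ∧ p a b ≤ 1) (c : ℝ) :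
    IsAntichain (· <+: ·) {l | IsCrossing G2 p c l} := by
  intro σ hσ τ hτ hne hστ
  have hlen : σ.length < τ.length :=
    lt_of_le_of_ne hστ.length_le fun h => hne (hστ.eq_of_length h)
  have hσ' : σ <+: τ.dropLast :=
    List.prefix_of_prefix_length_le hστ τ.dropLast_prefix (by rw [List.length_dropLast]; omega)
  have := pword_le_of_isPrefix hp hσ.1.1 hτ.1.2.dropLast hσ'
  linarith [hσ.2.2, hτ.2.1]

lemma exists_isCrossing_of_isPrefix {ρ τ : List (Fin N)} (hτ : admissibleG G2 τ)
    (hτc : pword p τ < c) (hρ : ρ <+: τ) (hρc : c ≤ pword p ρ) :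
    ∃ σ, IsCrossing G2 p c σ ∧ σ <+: τ ∧ ρ.length < σ.length := by
  induction τ using List.reverseRecOn with
  | nil => exact absurd rfl hτ.1
  | append_singleton t a ih =>
    rcases List.prefix_concat_iff.mp hρ with rfl | hρt
    · linarith
    by_cases ht : c ≤ pword p t
    · refine ⟨t ++ [a], ⟨hτ, by rwa [List.dropLast_concat], hτc⟩, List.prefix_refl _, ?_⟩
      simpa using Nat.lt_succ_of_le hρt.length_le
    have hne : t ≠ [] := by
      rintro rfl
      rw [List.prefix_nil.mp hρt] at hρc
      exact ht hρc
    obtain ⟨σ, hσ, hσt, hlen⟩ :=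
      ih ⟨hne, hτ.2.prefix (List.prefix_append _ _)⟩ (not_le.mp ht) hρt
    exact ⟨σ, hσ, hσt.trans (List.prefix_append _ _), hlen⟩

lemma IsCrossing.exists_isPrefix (hcc' : c ≤ c') (hc' : c' ≤ 1) {τ : List (Fin N)}
    (hτ : IsCrossing G2 p c τ) : ∃ σ, IsCrossing G2 p c' σ ∧ σ <+: τ := by
  obtain ⟨σ, hσ, hστ, -⟩ := exists_isCrossing_of_isPrefix hτ.1 (hτ.2.2.trans_le hcc')
    List.nil_prefix (by simpa using hc')
  exact ⟨σ, hσ, hστ⟩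

lemma IsCrossing.exists_extension (hsucc : ∀ i, ∃ j, (i, j) ∈ G2)
    (hp : ∀ a b, (a, b) ∈ G2 → 0 ≤ p a b ∧ p a b ≤ q) (hq0 : 0 ≤ q) (hq1 : q < 1)
    (hc : 0 < c) (hcc' : c ≤ c') {σ : List (Fin N)} (hσ : IsCrossing G2 p c' σ) :
    ∃ τ, IsCrossing G2 p c τ ∧ σ <+: τ := by
  obtain ⟨n, hn⟩ := exists_pow_lt_of_lt_one hc hq1
  obtain ⟨m, rfl, hm⟩ := exists_admissibleG_append hsucc hσ.1 n
  have hσne : σ.length ≠ 0 := by simpa using hσ.1.1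
  have hlt : pword p (σ ++ m) < c := calc
    pword p (σ ++ m) ≤ q ^ ((σ ++ m).length - 1) := pword_le_pow hp hm.2
    _ ≤ q ^ m.length := pow_le_pow_of_le_one hq0 hq1.le (by simp; omega)
    _ < c := hn
  obtain ⟨τ, hτ, hτm, hlen⟩ := exists_isCrossing_of_isPrefix hm hlt
    (σ.dropLast_prefix.trans (List.prefix_append _ _)) (hcc'.trans hσ.2.1)
  refine ⟨τ, hτ, List.prefix_of_prefix_length_le (List.prefix_append _ _) hτm ?_⟩
  rw [List.length_dropLast] at hlen
  omega

lemma IsCrossing.length_le_of_isPrefix (hp : ∀ a b, (a, b) ∈ G2 → 0 ≤ p a b ∧ p a b ≤ q)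
    (hq0 : 0 < q) (hq1 : q ≤ 1) {k : ℕ} (hk : c * q ^ k ≤ c') {σ τ : List (Fin N)}
    (hσ : IsCrossing G2 p c σ) (hτ : IsCrossing G2 p c' τ) (hστ : σ <+: τ) :
    τ.length ≤ σ.length + k := by
  by_contra! hlen
  obtain ⟨m, hm⟩ : σ <+: τ.dropLast :=
    List.prefix_of_prefix_length_le hστ τ.dropLast_prefix (by rw [List.length_dropLast]; omega)
  have hmk : k ≤ m.length := by
    have := congrArg List.length hm
    simp only [List.length_append, List.length_dropLast] at this
    omega
  have hσ0 : 0 ≤ pword p σ := pword_nonneg (fun a b h => (hp a b h).1) hσ.1.2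
  have := calc
    c' ≤ pword p (σ ++ m) := hm ▸ hτ.2.1
    _ ≤ pword p σ * q ^ m.length := pword_append_le hp m hσ.1.1 (hm ▸ hτ.1.2.dropLast)
    _ ≤ pword p σ * q ^ k := mul_le_mul_of_nonneg_left (pow_le_pow_of_le_one hq0.le hq1 hmk) hσ0
    _ < c * q ^ k := mul_lt_mul_of_pos_right hσ.2.2 (pow_pos hq0 k)
  linarith

lemma setOf_isCrossing_finite (hp : ∀ a b, (a, b) ∈ G2 → 0 ≤ p a b ∧ p a b ≤ q)
    (hq0 : 0 ≤ q) (hq1 : q < 1) (hc : 0 < c) : {l | IsCrossing G2 p c l}.Finite := by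
  obtain ⟨n, hn⟩ := exists_pow_lt_of_lt_one hc hq1
  refine (List.finite_length_le (Fin N) (n + 1)).subset fun l hl => ?_
  show l.length ≤ n + 1
  by_contra! hlen
  have := calc
    c ≤ pword p l.dropLast := hl.2.1
    _ ≤ q ^ (l.dropLast.length - 1) := pword_le_pow hp hl.1.2.dropLast
    _ ≤ q ^ n := pow_le_pow_of_le_one hq0 hq1.le (by rw [List.length_dropLast]; omega)
  linarith

end Crossing

lemma pow_sInf_lt {a b : ℝ} (ha : 0 < a) (hb : b < 1) :
    b ^ sInf {h : ℕ | 1 ≤ h ∧ b ^ h < a} < a := by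
  obtain ⟨n, hn⟩ := exists_pow_lt_of_lt_one ha hb
  have hne : {h : ℕ | 1 ≤ h ∧ b ^ h < a}.Nonempty := by
    rcases n.eq_zero_or_pos with rfl | hn0
    · exact ⟨1, le_rfl, by linarith [pow_zero b, pow_one b]⟩
    · exact ⟨n, hn0, hn⟩
  exact (Nat.sInf_mem hne).2

theorem stmt1 {N : ℕ} (G2 : Finset (Fin N × Fin N)) (hG2 : G2.Nonempty)
    (p : Fin N → Fin N → ℝ)
    (hp : ∀ ij ∈ G2, 0 < p ij.1 ij.2 ∧ p ij.1 ij.2 < 1)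
    (hsucc : ∀ i : Fin N, 2 ≤ (G2.filter fun ij => ij.1 = i).card)
    (pmin pmax : ℝ)
    (hpmin : pmin = G2.inf' hG2 fun ij => p ij.1 ij.2)
    (hpmax : pmax = G2.sup' hG2 fun ij => p ij.1 ij.2)
    (Λ : ℕ → Set (List (Fin N)))
    (hΛ : ∀ j, Λ j = {l | admissibleG G2 l ∧
      pmin ^ j ≤ pword p l.dropLast ∧ pword p l < pmin ^ j})
    (ψ : ℕ → ℕ) (hψ : ∀ j, ψ j = (Λ j).ncard)
    (N1 : ℕ) (hN1 : N1 = sInf {h : ℕ | 1 ≤ h ∧ pmax ^ h < pmin}) :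
    ∃ N2 : ℕ, 0 < N2 ∧ N2 = N ^ (N1 + 1) ∧
      ∀ j, 1 ≤ j → ψ j ≤ ψ (j + 1) ∧ ψ (j + 1) ≤ N2 * ψ j := by
  obtain rfl : Λ = fun j => {l | IsCrossing G2 p (pmin ^ j) l} := funext hΛ
  obtain ⟨e, he⟩ := id hG2
  have hpmin0 : 0 < pmin := hpmin ▸ (Finset.lt_inf'_iff _).mpr fun e he => (hp e he).1
  have hpmin1 : pmin < 1 := hpmin ▸ (Finset.inf'_le _ he).trans_lt (hp e he).2
  have hpmax1 : pmax < 1 := hpmax ▸ (Finset.sup'_lt_iff _).mpr fun e he => (hp e he).2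
  have hw : ∀ a b, (a, b) ∈ G2 → 0 ≤ p a b ∧ p a b ≤ pmax := fun a b h =>
    ⟨(hp _ h).1.le, hpmax ▸ Finset.le_sup' (fun ij => p ij.1 ij.2) h⟩
  have hw1 : ∀ a b, (a, b) ∈ G2 → 0 ≤ p a b ∧ p a b ≤ 1 := fun a b h =>
    ⟨(hw a b h).1, (hw a b h).2.trans hpmax1.le⟩
  have hpmax0 : 0 < pmax := (hp e he).1.trans_le (hw _ _ he).2
  have hsucc' : ∀ i, ∃ j, (i, j) ∈ G2 := fun i => by
    obtain ⟨ij, hij⟩ := Finset.card_pos.mp (lt_of_lt_of_le two_pos (hsucc i))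
    obtain ⟨hmem, rfl⟩ := Finset.mem_filter.mp hij
    exact ⟨ij.2, hmem⟩
  have hfin (j : ℕ) := setOf_isCrossing_finite hw hpmax0.le hpmax1 (pow_pos hpmin0 j)
  have hanti (j : ℕ) := isAntichain_setOf_isCrossing hw1 (pmin ^ j)
  have hstep (j : ℕ) : pmin ^ (j + 1) ≤ pmin ^ j :=
    pow_le_pow_of_le_one hpmin0.le hpmin1.le j.le_succ
  have hdrop (j : ℕ) : pmin ^ j * pmax ^ N1 ≤ pmin ^ (j + 1) := by
    rw [pow_succ]
    exact mul_le_mul_of_nonneg_left (hN1 ▸ pow_sInf_lt hpmin0 hpmax1).le (by positivity)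
  have : Nonempty (Fin N) := ⟨e.1⟩
  refine ⟨_, pow_pos (Fin.pos e.1) _, rfl, fun j _ => ⟨?_, ?_⟩⟩
  · rw [hψ, hψ]
    refine ncard_le_ncard_of_forall_isPrefix (hanti j) (hfin _) fun σ hσ => ?_
    exact hσ.exists_extension hsucc' hw hpmax0.le hpmax1 (pow_pos hpmin0 _) (hstep j)
  · rw [hψ, hψ, mul_comm]
    refine (ncard_le_ncard_mul_pow_of_forall_isPrefix (hanti _) (hfin j) _ fun τ hτ => ?_).trans_eq
      (by rw [Fintype.card_fin])
    obtain ⟨σ, hσ, hστ⟩ := hτ.exists_isPrefix (hstep j) (pow_le_one₀ hpmin0.le hpmin1.le)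
    exact ⟨σ, hσ, hστ, (hσ.length_le_of_isPrefix hw hpmax0 hpmax1.le (hdrop j) hτ hστ).trans
      (Nat.add_le_add_left N1.le_succ _)⟩
end

section
/- In the setting of an irreducible row-stochastic matrix P with contraction ratios c_{ij} ∈ (0,1) and positive initial probability vector (q_i), let s_k := u_k / l_k where u_k := Σ_{σ ∈ G_k} m_σ log m_σ and l_k := Σ_{σ ∈ G_k} m_σ log c_σ, and let s_0 := u_0/l_0 with u_0 := Σ_i v_i Σ_j p_{ij} log p_{ij} and l_0 := Σ_i v_i Σ_j p_{ij} log c_{ij}. Then there exists a constant C_2 such that |s_k − s_0| ≤ C_2 / k for all sufficiently large k. -/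
open Finset

/-- Product of the entries of `A` along a word of length `k+1`. -/
noncomputable def wprod {N k : ℕ} (A : Matrix (Fin N) (Fin N) ℝ)
    (σ : Fin (k + 1) → Fin N) : ℝ :=
  ∏ t : Fin k, A (σ t.castSucc) (σ t.succ)

/-- `u_k = ∑_{σ ∈ G_k} m_σ log m_σ` (convention `0 log 0 = 0`). -/
noncomputable def useq {N : ℕ} (q : Fin N → ℝ) (P : Matrix (Fin N) (Fin N) ℝ)
    (k : ℕ) : ℝ :=
  ∑ σ : Fin (k - 1 + 1) → Fin N,
    (q (σ 0) * wprod P σ) * Real.log (q (σ 0) * wprod P σ)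

/-- `l_k = ∑_{σ ∈ G_k} m_σ log c_σ`. -/
noncomputable def lseq {N : ℕ} (q : Fin N → ℝ) (P c : Matrix (Fin N) (Fin N) ℝ)
    (k : ℕ) : ℝ :=
  ∑ σ : Fin (k - 1 + 1) → Fin N,
    (q (σ 0) * wprod P σ) * Real.log (wprod c σ)

/-! Both `u_k` and `l_k` are additive functionals of the Markov chain with initial law `q` and
transition matrix `P`: appending a letter to the words of length `k` adds `(q P^(k-1)) ⬝ h` to
the sum, where `h i = ∑ j, P i j * log (P i j)`, resp. `∑ j, P i j * log (c i j)`. Irreducibility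
makes `1 - P + 1 vᵀ` invertible, so the Poisson equation `g - P g = h - (v ⬝ h) 1` has a
solution `g`, and telescoping gives `u_k = k u_0 + O(1)` and `l_k = k l_0 + O(1)`. Since
`l_0 < 0`, the quotient `u_k / l_k` is then within `O(1/k)` of `u_0 / l_0`. -/

open Matrix Filter

namespace Matrix

section

variable {n : Type*} [Fintype n]

theorem dotProduct_const_of_dotProduct_one {x : n → ℝ} (hx : x ⬝ᵥ 1 = 1) (a : ℝ) :
    x ⬝ᵥ Function.const n a = a := by
  rw [show Function.const n a = a • 1 from funext fun _ => (mul_one a).symm, dotProduct_smul,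
    hx, smul_eq_mul, mul_one]

end

variable {n : Type*} [Fintype n] [DecidableEq n] {P : Matrix n n ℝ}

theorem apply_eq_of_mulVec_eq_self_of_forall_le (hP : P ∈ rowStochastic ℝ n) {z : n → ℝ}
    (hz : P *ᵥ z = z) {i : n} (hi : ∀ j, z j ≤ z i) {j : n} (hij : 0 < P i j) : z j = z i := by
  have hzi : ∑ k, P i k * z k = z i := congrFun hz i
  have hsum : ∑ k, P i k * (z i - z k) = 0 := by
    simp only [mul_sub, sum_sub_distrib, ← sum_mul, sum_row_of_mem_rowStochastic hP, one_mul,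
      hzi, sub_self]
  have := (sum_eq_zero_iff_of_nonneg fun k _ =>
    mul_nonneg (nonneg_of_mem_rowStochastic hP) (sub_nonneg.2 (hi k))).1 hsum j (mem_univ j)
  have := (mul_eq_zero.1 this).resolve_left hij.ne'
  linarith

theorem mulVec_pow_eq_self {z : n → ℝ} (hz : P *ᵥ z = z) (m : ℕ) : P ^ m *ᵥ z = z := by
  induction m with
  | zero => simp
  | succ m ih => rw [pow_succ, ← mulVec_mulVec, hz, ih]

theorem apply_eq_apply_of_mulVec_eq_self (hP : P ∈ rowStochastic ℝ n)
    (hirr : ∀ i j, ∃ m, 0 < (P ^ m) i j) {z : n → ℝ} (hz : P *ᵥ z = z) (i j : n) :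
    z i = z j := by
  have : Nonempty n := ⟨i⟩
  obtain ⟨k, hk⟩ := Finite.exists_max z
  have h (l : n) : z l = z k := by
    obtain ⟨m, hm⟩ := hirr k l
    exact apply_eq_of_mulVec_eq_self_of_forall_le (pow_mem hP m) (mulVec_pow_eq_self hz m) hk hm
  rw [h i, h j]

theorem exists_sub_mulVec_eq_sub_const (hP : P ∈ rowStochastic ℝ n)
    (hirr : ∀ i j, ∃ m, 0 < (P ^ m) i j) {v : n → ℝ} (hv : v ᵥ* P = v) (hv1 : v ⬝ᵥ 1 = 1)
    (d : n → ℝ) : ∃ g, g - P *ᵥ g = d - Function.const n (v ⬝ᵥ d) := by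
  set M : Matrix n n ℝ := 1 - P + replicateRow n v
  have hM (z : n → ℝ) : M *ᵥ z = z - P *ᵥ z + Function.const n (v ⬝ᵥ z) := by
    simp only [M, add_mulVec, sub_mulVec, one_mulVec, replicateRow_mulVec_eq_const]
  have hvM (z : n → ℝ) : v ⬝ᵥ (M *ᵥ z) = v ⬝ᵥ z := by
    rw [hM, dotProduct_add, dotProduct_sub, dotProduct_mulVec, hv, sub_self, zero_add,
      dotProduct_const_of_dotProduct_one hv1]
  have hker (z : n → ℝ) (hz : M *ᵥ z = 0) : z = 0 := by
    have hvz : v ⬝ᵥ z = 0 := by rw [← hvM, hz, dotProduct_zero]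
    have hfix : P *ᵥ z = z := by
      rw [hM, hvz] at hz
      simpa [sub_eq_zero, eq_comm] using hz
    funext i
    calc z i = v ⬝ᵥ Function.const n (z i) := (dotProduct_const_of_dotProduct_one hv1 _).symm
      _ = v ⬝ᵥ z := congrArg _ (funext (apply_eq_apply_of_mulVec_eq_self hP hirr hfix i))
      _ = 0 := hvz
  have hinj : Function.Injective M.mulVec := fun x y hxy =>
    sub_eq_zero.1 (hker _ (by rw [mulVec_sub, hxy, sub_self]))
  obtain ⟨g, hg⟩ := mulVec_surjective_iff_isUnit.2 (mulVec_injective_iff_isUnit.1 hinj) d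
  have hvg : v ⬝ᵥ g = v ⬝ᵥ d := by rw [← hg, hvM]
  refine ⟨g, ?_⟩
  rw [← hvg, ← hg, hM, add_sub_cancel_right]

theorem sum_range_vecMul_pow_dotProduct (hP : P ∈ rowStochastic ℝ n) {q : n → ℝ}
    (hq1 : q ⬝ᵥ 1 = 1) {g d : n → ℝ} {a : ℝ} (hg : g - P *ᵥ g = d - Function.const n a)
    (k : ℕ) :
    ∑ m ∈ range k, (q ᵥ* P ^ m) ⬝ᵥ d = k * a + (q ⬝ᵥ g - (q ᵥ* P ^ k) ⬝ᵥ g) := by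
  have hd : d = g - P *ᵥ g + Function.const n a := by rw [hg, sub_add_cancel]
  have hterm (m : ℕ) :
      (q ᵥ* P ^ m) ⬝ᵥ d = a + ((q ᵥ* P ^ m) ⬝ᵥ g - (q ᵥ* P ^ (m + 1)) ⬝ᵥ g) := by
    rw [hd, dotProduct_add, dotProduct_sub, dotProduct_mulVec, vecMul_vecMul, ← pow_succ,
      dotProduct_const_of_dotProduct_one
        (vecMul_dotProduct_one_eq_one_rowStochastic (pow_mem hP m) hq1)]
    ring
  simp only [hterm, sum_add_distrib, sum_const, card_range, nsmul_eq_mul,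
    sum_range_sub' (fun m => (q ᵥ* P ^ m) ⬝ᵥ g), pow_zero, vecMul_one]

theorem abs_dotProduct_mulVec_le_of_mem_rowStochastic {S : Matrix n n ℝ}
    (hS : S ∈ rowStochastic ℝ n) (x y : n → ℝ) : |x ⬝ᵥ (S *ᵥ y)| ≤ (∑ i, |x i|) * ∑ j, |y j| := by
  have hentry (i j : n) : |x i * S i j * y j| ≤ |x i| * |y j| := by
    rw [abs_mul, abs_mul, abs_of_nonneg (nonneg_of_mem_rowStochastic hS)]
    gcongr
    exact mul_le_of_le_one_right (abs_nonneg _) (le_one_of_mem_rowStochastic hS)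
  calc |x ⬝ᵥ (S *ᵥ y)| = |∑ i, ∑ j, x i * S i j * y j| := by
        simp only [dotProduct, mulVec, mul_sum, mul_assoc]
    _ ≤ ∑ i, ∑ j, |x i| * |y j| := (abs_sum_le_sum_abs _ _).trans
        (sum_le_sum fun i _ => (abs_sum_le_sum_abs _ _).trans (sum_le_sum fun j _ => hentry i j))
    _ = (∑ i, |x i|) * ∑ j, |y j| := (sum_mul_sum _ _ _ _).symm

theorem exists_abs_sum_range_vecMul_pow_dotProduct_sub_le (hP : P ∈ rowStochastic ℝ n)
    (hirr : ∀ i j, ∃ m, 0 < (P ^ m) i j) {v : n → ℝ} (hv : v ᵥ* P = v) (hv1 : v ⬝ᵥ 1 = 1)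
    {q : n → ℝ} (hq1 : q ⬝ᵥ 1 = 1) (d : n → ℝ) :
    ∃ C, ∀ k : ℕ, |∑ m ∈ range k, (q ᵥ* P ^ m) ⬝ᵥ d - k * (v ⬝ᵥ d)| ≤ C := by
  obtain ⟨g, hg⟩ := exists_sub_mulVec_eq_sub_const hP hirr hv hv1 d
  refine ⟨2 * ((∑ i, |q i|) * ∑ j, |g j|), fun k => ?_⟩
  have h0 := abs_dotProduct_mulVec_le_of_mem_rowStochastic (one_mem _) q g
  have hk := abs_dotProduct_mulVec_le_of_mem_rowStochastic (pow_mem hP k) q g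
  rw [one_mulVec] at h0
  rw [sum_range_vecMul_pow_dotProduct hP hq1 hg, add_sub_cancel_left, ← dotProduct_mulVec]
  linarith [abs_sub (q ⬝ᵥ g) (q ⬝ᵥ (P ^ k *ᵥ g))]

theorem exists_eventually_abs_sub_mul_dotProduct_le (hP : P ∈ rowStochastic ℝ n)
    (hirr : ∀ i j, ∃ m, 0 < (P ^ m) i j) {v : n → ℝ} (hv : v ᵥ* P = v) (hv1 : v ⬝ᵥ 1 = 1)
    {q : n → ℝ} (hq1 : q ⬝ᵥ 1 = 1) {F : ℕ → ℝ} {d : n → ℝ}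
    (hF : ∀ k, F (k + 2) = F (k + 1) + (q ᵥ* P ^ k) ⬝ᵥ d) :
    ∃ C, ∀ᶠ k in atTop, |F k - k * (v ⬝ᵥ d)| ≤ C := by
  obtain ⟨C, hC⟩ := exists_abs_sum_range_vecMul_pow_dotProduct_sub_le hP hirr hv hv1 hq1 d
  have hsum (k : ℕ) : F (k + 1) = F 1 + ∑ m ∈ range k, (q ᵥ* P ^ m) ⬝ᵥ d := by
    induction k with
    | zero => simp
    | succ k ih => rw [hF, ih, sum_range_succ, add_assoc]
  refine ⟨|F 1 - v ⬝ᵥ d| + C, eventually_atTop.2 ⟨1, fun k hk => ?_⟩⟩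
  obtain ⟨k, rfl⟩ := Nat.exists_eq_add_of_le' hk
  calc |F (k + 1) - ↑(k + 1) * (v ⬝ᵥ d)|
      = |(F 1 - v ⬝ᵥ d) + (∑ m ∈ range k, (q ᵥ* P ^ m) ⬝ᵥ d - k * (v ⬝ᵥ d))| := by
        rw [hsum]; push_cast; ring_nf
    _ ≤ |F 1 - v ⬝ᵥ d| + C := (abs_add_le _ _).trans (by gcongr; exact hC k)

end Matrix

section Words

variable {N : ℕ}

theorem sum_fun_fin_succ_eq_sum_snoc {n : ℕ} (f : (Fin (n + 2) → Fin N) → ℝ) :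
    ∑ σ, f σ = ∑ τ : Fin (n + 1) → Fin N, ∑ x, f (Fin.snoc τ x) := by
  rw [← (Fin.snocEquiv fun _ => Fin N).sum_comp, Fintype.sum_prod_type, Finset.sum_comm]
  rfl

theorem wprod_snoc {n : ℕ} (A : Matrix (Fin N) (Fin N) ℝ) (τ : Fin (n + 1) → Fin N) (x : Fin N) :
    wprod A (Fin.snoc τ x : Fin (n + 2) → Fin N) = wprod A τ * A (τ (Fin.last n)) x := by
  simp [wprod, Fin.prod_univ_castSucc, ← Fin.castSucc_succ]

noncomputable def wordWeight {n : ℕ} (q : Fin N → ℝ) (P : Matrix (Fin N) (Fin N) ℝ)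
    (σ : Fin (n + 1) → Fin N) : ℝ :=
  q (σ 0) * wprod P σ

variable (q : Fin N → ℝ) (P : Matrix (Fin N) (Fin N) ℝ)

theorem wordWeight_snoc {n : ℕ} (τ : Fin (n + 1) → Fin N) (x : Fin N) :
    wordWeight q P (Fin.snoc τ x : Fin (n + 2) → Fin N)
      = wordWeight q P τ * P (τ (Fin.last n)) x := by
  rw [wordWeight, wordWeight, wprod_snoc, mul_assoc]
  congr 2

theorem sum_wordWeight_mul_apply_last (n : ℕ) (f : Fin N → ℝ) :
    ∑ σ : Fin (n + 1) → Fin N, wordWeight q P σ * f (σ (Fin.last n)) = (q ᵥ* P ^ n) ⬝ᵥ f := by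
  induction n generalizing f with
  | zero =>
    rw [← (Equiv.funUnique (Fin 1) (Fin N)).symm.sum_comp]
    simp [wordWeight, wprod, dotProduct]
  | succ n ih =>
    rw [sum_fun_fin_succ_eq_sum_snoc, pow_succ, ← vecMul_vecMul, ← dotProduct_mulVec, ← ih]
    simp only [wordWeight_snoc, Fin.snoc_last, mulVec, dotProduct, Finset.mul_sum, mul_assoc]

theorem sum_fun_fin_succ_eq_add_of_snoc (hrow : ∀ i, ∑ j, P i j = 1) {n : ℕ}
    (Φ : (Fin (n + 1) → Fin N) → ℝ) (Ψ : (Fin (n + 2) → Fin N) → ℝ)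
    (ψ : Matrix (Fin N) (Fin N) ℝ)
    (hΨ : ∀ τ x, Ψ (Fin.snoc τ x)
      = P (τ (Fin.last n)) x * Φ τ + wordWeight q P τ * ψ (τ (Fin.last n)) x) :
    ∑ σ, Ψ σ = ∑ τ, Φ τ + (q ᵥ* P ^ n) ⬝ᵥ fun i => ∑ j, ψ i j := by
  simp only [sum_fun_fin_succ_eq_sum_snoc, hΨ, Finset.sum_add_distrib, ← Finset.sum_mul, hrow,
    one_mul, ← Finset.mul_sum]
  exact congrArg _ (sum_wordWeight_mul_apply_last q P n fun i => ∑ j, ψ i j)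

theorem mul_mul_log_mul {a b c d : ℝ} (h : a * b ≠ 0 → c ≠ 0 ∧ d ≠ 0) :
    a * b * Real.log (c * d) = b * (a * Real.log c) + a * (b * Real.log d) := by
  by_cases hab : a * b = 0
  · linear_combination (Real.log (c * d) - Real.log c - Real.log d) * hab
  · obtain ⟨hc, hd⟩ := h hab
    rw [Real.log_mul hc hd]
    ring

theorem useq_succ_succ (hrow : ∀ i, ∑ j, P i j = 1) (n : ℕ) :
    useq q P (n + 2)
      = useq q P (n + 1) + (q ᵥ* P ^ n) ⬝ᵥ fun i => ∑ j, P i j * Real.log (P i j) := by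
  refine sum_fun_fin_succ_eq_add_of_snoc q P hrow _ _ _ fun τ x => ?_
  change wordWeight q P (Fin.snoc τ x : Fin (n + 2) → Fin N)
      * Real.log (wordWeight q P (Fin.snoc τ x : Fin (n + 2) → Fin N)) = _
  rw [wordWeight_snoc]
  exact mul_mul_log_mul fun h => ⟨left_ne_zero_of_mul h, right_ne_zero_of_mul h⟩

theorem wprod_ne_zero_of_wprod_ne_zero {P c : Matrix (Fin N) (Fin N) ℝ}
    (hPc : ∀ i j, P i j ≠ 0 → c i j ≠ 0) {n : ℕ} {σ : Fin (n + 1) → Fin N}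
    (hσ : wprod P σ ≠ 0) : wprod c σ ≠ 0 :=
  Finset.prod_ne_zero_iff.2 fun t ht => hPc _ _ (Finset.prod_ne_zero_iff.1 hσ t ht)

theorem lseq_succ_succ (hrow : ∀ i, ∑ j, P i j = 1) {c : Matrix (Fin N) (Fin N) ℝ}
    (hPc : ∀ i j, P i j ≠ 0 → c i j ≠ 0) (n : ℕ) :
    lseq q P c (n + 2)
      = lseq q P c (n + 1) + (q ᵥ* P ^ n) ⬝ᵥ fun i => ∑ j, P i j * Real.log (c i j) := by
  refine sum_fun_fin_succ_eq_add_of_snoc q P hrow _ _ _ fun τ x => ?_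
  change wordWeight q P (Fin.snoc τ x : Fin (n + 2) → Fin N)
      * Real.log (wprod c (Fin.snoc τ x : Fin (n + 2) → Fin N)) = _
  rw [wordWeight_snoc, wprod_snoc]
  exact mul_mul_log_mul fun h => ⟨wprod_ne_zero_of_wprod_ne_zero hPc
    (right_ne_zero_of_mul (left_ne_zero_of_mul h)), hPc _ _ (right_ne_zero_of_mul h)⟩

end Words

theorem exists_eventually_abs_div_sub_div_le {a b : ℕ → ℝ} {α β Ca Cb : ℝ} (hβ : β ≠ 0)
    (ha : ∀ᶠ k in atTop, |a k - k * α| ≤ Ca) (hb : ∀ᶠ k in atTop, |b k - k * β| ≤ Cb) :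
    ∃ C, ∀ᶠ k in atTop, |a k / b k - α / β| ≤ C / k := by
  have hβpos : 0 < |β| := abs_pos.2 hβ
  refine ⟨2 * (Ca * |β| + Cb * |α|) / β ^ 2, ?_⟩
  filter_upwards [ha, hb, tendsto_natCast_atTop_atTop.eventually_ge_atTop (2 * Cb / |β| + 1)]
    with k hak hbk hk
  have hCa : 0 ≤ Ca := (abs_nonneg _).trans hak
  have hCb : 0 ≤ Cb := (abs_nonneg _).trans hbk
  have hk1 : 1 ≤ (k : ℝ) := le_of_add_le_of_nonneg_right hk (by positivity)
  have hkβ : 2 * Cb ≤ k * |β| := by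
    rw [← div_le_iff₀ hβpos]; linarith
  have hbk' : k * |β| / 2 ≤ |b k| := by
    have := abs_sub_abs_le_abs_sub (k * β) (b k)
    rw [abs_sub_comm, abs_mul, Nat.abs_cast] at this
    linarith
  have hbpos : 0 < |b k| := lt_of_lt_of_le (by positivity) hbk'
  have hnum : |a k * β - b k * α| ≤ Ca * |β| + Cb * |α| := by
    calc |a k * β - b k * α| = |(a k - k * α) * β - (b k - k * β) * α| := by ring_nf
      _ ≤ |a k - k * α| * |β| + |b k - k * β| * |α| := by
          rw [← abs_mul, ← abs_mul]; exact abs_sub _ _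
      _ ≤ Ca * |β| + Cb * |α| := by gcongr
  rw [div_sub_div _ _ (abs_pos.1 hbpos) hβ, abs_div, abs_mul]
  calc |a k * β - b k * α| / (|b k| * |β|) ≤ (Ca * |β| + Cb * |α|) / (k * |β| / 2 * |β|) := by
        gcongr
    _ = 2 * (Ca * |β| + Cb * |α|) / β ^ 2 / k := by
        rw [← sq_abs β]; field_simp

theorem dotProduct_sum_mul_log_neg {n : Type*} [Fintype n] [Nonempty n] {P c : Matrix n n ℝ}
    (hnn : ∀ i j, 0 ≤ P i j) (hrow : ∀ i, ∑ j, P i j = 1)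
    (hc : ∀ i j, 0 < P i j → 0 < c i j ∧ c i j < 1) {v : n → ℝ} (hv : ∀ i, 0 < v i) :
    v ⬝ᵥ (fun i => ∑ j, P i j * Real.log (c i j)) < 0 := by
  have hrow_neg (i : n) : ∑ j, P i j * Real.log (c i j) < 0 := by
    obtain ⟨j, -, hj⟩ := exists_lt_of_sum_lt (s := univ) (f := fun _ => (0 : ℝ)) (g := P i)
      (by simp [hrow])
    have hterm (j : n) (hj : 0 < P i j) : P i j * Real.log (c i j) < 0 :=
      mul_neg_of_pos_of_neg hj (Real.log_neg (hc i j hj).1 (hc i j hj).2)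
    refine sum_neg' (fun k _ => ?_) ⟨j, mem_univ j, hterm j hj⟩
    rcases (hnn i k).eq_or_lt with h | h
    · simp [← h]
    · exact (hterm k h).le
  exact sum_neg (fun i _ => mul_neg_of_pos_of_neg (hv i) (hrow_neg i)) univ_nonempty

theorem stmt6_general {N : ℕ} (P c : Matrix (Fin N) (Fin N) ℝ)
    (hnn : ∀ i j, 0 ≤ P i j) (hrow : ∀ i, ∑ j, P i j = 1)
    (hirr : ∀ i j, ∃ m, 1 ≤ m ∧ 0 < (P ^ m) i j)
    (hc : ∀ i j, 0 < P i j → 0 < c i j ∧ c i j < 1)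
    (q : Fin N → ℝ) (hq1 : ∑ i, q i = 1)
    (v : Fin N → ℝ) (hvpos : ∀ i, 0 < v i) (hv1 : ∑ i, v i = 1)
    (hveig : ∀ j, ∑ i, v i * P i j = v j)
    (s0 : ℝ)
    (hs0 : s0 = (∑ i, v i * ∑ j, P i j * Real.log (P i j)) /
                (∑ i, v i * ∑ j, P i j * Real.log (c i j))) :
    ∃ C2 : ℝ, ∃ K : ℕ, ∀ k : ℕ, K ≤ k →
      |useq q P k / lseq q P c k - s0| ≤ C2 / (k : ℝ) := by
  have hP : P ∈ rowStochastic ℝ (Fin N) := mem_rowStochastic_iff_sum.2 ⟨hnn, hrow⟩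
  have hirr' (i j : Fin N) : ∃ m, 0 < (P ^ m) i j := (hirr i j).imp fun _ => And.right
  have hv : v ᵥ* P = v := funext hveig
  have hv1' : v ⬝ᵥ 1 = 1 := by simpa [dotProduct] using hv1
  have hq1' : q ⬝ᵥ 1 = 1 := by simpa [dotProduct] using hq1
  have hPc (i j : Fin N) (h : P i j ≠ 0) : c i j ≠ 0 := (hc i j ((hnn i j).lt_of_ne' h)).1.ne'
  have : Nonempty (Fin N) := univ_nonempty_iff.1 (nonempty_of_sum_ne_zero (hv1 ▸ one_ne_zero))
  obtain ⟨Cu, hu⟩ :=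
    exists_eventually_abs_sub_mul_dotProduct_le hP hirr' hv hv1' hq1' (useq_succ_succ q P hrow)
  obtain ⟨Cl, hl⟩ :=
    exists_eventually_abs_sub_mul_dotProduct_le hP hirr' hv hv1' hq1' (lseq_succ_succ q P hrow hPc)
  obtain ⟨C2, hC2⟩ := exists_eventually_abs_div_sub_div_le
    (dotProduct_sum_mul_log_neg hnn hrow hc hvpos).ne hu hl
  obtain ⟨K, hK⟩ := eventually_atTop.1 hC2
  exact ⟨C2, K, fun k hk => hs0 ▸ hK k hk⟩

theorem stmt6 {N : ℕ} (P c : Matrix (Fin N) (Fin N) ℝ)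
    (hnn : ∀ i j, 0 ≤ P i j) (hrow : ∀ i, ∑ j, P i j = 1)
    (hirr : ∀ i j, ∃ m, 1 ≤ m ∧ 0 < (P ^ m) i j)
    (hc : ∀ i j, 0 < P i j → 0 < c i j ∧ c i j < 1)
    (hc0 : ∀ i j, P i j = 0 → c i j = 0)
    (q : Fin N → ℝ) (hq : ∀ i, 0 < q i) (hq1 : ∑ i, q i = 1)
    (v : Fin N → ℝ) (hvpos : ∀ i, 0 < v i) (hv1 : ∑ i, v i = 1)
    (hveig : ∀ j, ∑ i, v i * P i j = v j)
    (s0 : ℝ)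
    (hs0 : s0 = (∑ i, v i * ∑ j, P i j * Real.log (P i j)) /
                (∑ i, v i * ∑ j, P i j * Real.log (c i j))) :
    ∃ C2 : ℝ, ∃ K : ℕ, ∀ k : ℕ, K ≤ k →
      |useq q P k / lseq q P c k - s0| ≤ C2 / (k : ℝ) :=
  stmt6_general P c hnn hrow hirr hc q hq1 v hvpos hv1 hveig s0 hs0
end
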